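/- There exists a finite simple graph P on 13 vertices with independence number α(P) = 2, clique number ω(P) = 4, and chromatic number χ(P) = 7. In particular, P is K_5-free and χ(P) ≥ 7, so F_v(2_6; 5) ≤ 13. -/

import Mathlib

open SimpleGraph

/-- The vertex Folkman number `F_v(2_r; q)`: the minimum number of vertices of a
`K_q`-free finite simple graph with chromatic number at least `r + 1`. -/
noncomputable def folkman (r q : ℕ) : ℕ :=
  sInf {n : ℕ | ∃ G : SimpleGraph (Fin n),
    G.CliqueFree q ∧ (r + 1 : ℕ∞) ≤ G.chromaticNumber}

/-- Adjacency of the 13-vertex Greenwood–Gleason graph: `x ~ y` iff `x ≠ y` and the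
difference `x - y` (mod 13) is NOT a cubic residue (i.e. not in `{1, 5, 8, 12}`). -/
def Padj (x y : Fin 13) : Prop :=
  x ≠ y ∧ x - y ≠ 1 ∧ x - y ≠ 5 ∧ x - y ≠ 8 ∧ x - y ≠ 12

instance : DecidableRel Padj := fun x y => by unfold Padj; infer_instance

def P13 : SimpleGraph (Fin 13) where
  Adj := Padj
  symm := ⟨by intro x y h; revert h; revert x y; decide⟩
  loopless := ⟨by intro x h; revert h; revert x; decide⟩

instance : DecidableRel P13.Adj := fun x y => by
  show Decidable (Padj x y); infer_instance

instance : DecidableRel P13ᶜ.Adj := fun x y => by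
  show Decidable (x ≠ y ∧ ¬ P13.Adj x y); infer_instance

set_option synthInstance.maxSize 2000 in
set_option synthInstance.maxHeartbeats 1000000 in
set_option maxHeartbeats 4000000 in
lemma no5 : ∀ a b : Fin 13, Padj a b → ∀ c, Padj a c ∧ Padj b c →
    ∀ d, Padj a d ∧ Padj b d ∧ Padj c d →
    ∀ e, Padj a e ∧ Padj b e ∧ Padj c e ∧ Padj d e → False := by decide

lemma no3c : ∀ a b c : Fin 13, P13ᶜ.Adj a b → P13ᶜ.Adj a c → P13ᶜ.Adj b c → False := by
  decide

lemma P13_cf5 : P13.CliqueFree 5 := by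
  rw [cliqueFree_iff]
  constructor
  intro f
  exact no5 (f 0) (f 1) (f.toHom.map_adj (by decide)) (f 2)
    ⟨f.toHom.map_adj (by decide), f.toHom.map_adj (by decide)⟩ (f 3)
    ⟨f.toHom.map_adj (by decide), f.toHom.map_adj (by decide), f.toHom.map_adj (by decide)⟩
    (f 4)
    ⟨f.toHom.map_adj (by decide), f.toHom.map_adj (by decide), f.toHom.map_adj (by decide),
      f.toHom.map_adj (by decide)⟩

lemma P13c_cf3 : P13ᶜ.CliqueFree 3 := by
  rw [cliqueFree_iff]
  constructor
  intro f
  exact no3c (f 0) (f 1) (f 2)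
    (f.toHom.map_adj (by decide)) (f.toHom.map_adj (by decide)) (f.toHom.map_adj (by decide))

lemma bdd13 (G : SimpleGraph (Fin 13)) : BddAbove {n | ∃ s, G.IsNClique n s} := by
  refine ⟨13, fun n ⟨s, hs⟩ => ?_⟩
  have h1 := hs.card_eq
  have h2 : s.card ≤ 13 := le_trans (Finset.card_le_card (Finset.subset_univ s)) (by simp)
  omega

lemma cliqueNum_le_of_cf {G : SimpleGraph (Fin 13)} {k : ℕ} (h : G.CliqueFree (k + 1)) :
    G.cliqueNum ≤ k := by
  by_contra hlt
  push_neg at hlt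
  obtain ⟨s, hs⟩ := G.exists_isNClique_cliqueNum
  have hc := hs.card_eq
  obtain ⟨t, hts, htc⟩ := Finset.exists_subset_card_eq (n := k + 1) (by omega : k + 1 ≤ s.card)
  exact h t ⟨hs.isClique.subset hts, htc⟩

lemma le_cliqueNum_of_clique {G : SimpleGraph (Fin 13)} {k : ℕ} {s : Finset (Fin 13)}
    (h : G.IsNClique k s) : k ≤ G.cliqueNum :=
  le_csSup (bdd13 G) ⟨s, h⟩

lemma P13_col7 : P13.Colorable 7 :=
  ⟨Coloring.mk (fun v => ⟨v / 2, by omega⟩)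
    (by intro a b h; revert h; revert a b
        show ∀ a b : Fin 13, Padj a b → (⟨a / 2, by omega⟩ : Fin 7) ≠ ⟨b / 2, by omega⟩
        decide)⟩

lemma P13_not_col6 : ¬ P13.Colorable 6 := by
  rintro ⟨C⟩
  obtain ⟨y, hy⟩ := Fintype.exists_lt_card_fiber_of_mul_lt_card (f := C) (n := 2) (by simp)
  rw [Finset.two_lt_card] at hy
  obtain ⟨a, ha, b, hb, c, hc, hab, hac, hbc⟩ := hy
  simp only [Finset.mem_filter] at ha hb hc
  have nab : ¬ P13.Adj a b := fun h => C.valid h (ha.2.trans hb.2.symm)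
  have nac : ¬ P13.Adj a c := fun h => C.valid h (ha.2.trans hc.2.symm)
  have nbc : ¬ P13.Adj b c := fun h => C.valid h (hb.2.trans hc.2.symm)
  exact no3c a b c ⟨hab, nab⟩ ⟨hac, nac⟩ ⟨hbc, nbc⟩

lemma P13_chrom : P13.chromaticNumber = 7 := by
  have h1 : P13.chromaticNumber ≤ 7 := by
    have := P13_col7.chromaticNumber_le
    exact_mod_cast this
  have h2 : ¬ P13.chromaticNumber ≤ 6 := by
    intro h
    exact P13_not_col6 (chromaticNumber_le_iff_colorable.mp (by exact_mod_cast h))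
  have h3 : (7 : ℕ∞) ≤ P13.chromaticNumber := by
    have h6 : (6 : ℕ∞) < P13.chromaticNumber := lt_of_not_ge h2
    have := (ENat.add_one_le_iff (by simp : (6 : ℕ∞) ≠ ⊤)).mpr h6
    convert this using 1 <;> norm_num
  exact le_antisymm h1 h3

lemma P13_chrom_ge : (7 : ℕ∞) ≤ P13.chromaticNumber := P13_chrom ▸ le_refl _

theorem stmt_13 :
    (∃ P : SimpleGraph (Fin 13),
        Pᶜ.cliqueNum = 2 ∧ P.cliqueNum = 4 ∧ P.chromaticNumber = 7 ∧
        P.CliqueFree 5 ∧ (7 : ℕ∞) ≤ P.chromaticNumber) ∧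
    folkman 6 5 ≤ 13 := by
  constructor
  · refine ⟨P13, ?_, ?_, P13_chrom, P13_cf5, P13_chrom_ge⟩
    · refine le_antisymm (cliqueNum_le_of_cf (by exact_mod_cast P13c_cf3)) ?_
      exact le_cliqueNum_of_clique (s := {0, 1}) (by constructor <;> decide)
    · refine le_antisymm (cliqueNum_le_of_cf (by exact_mod_cast P13_cf5)) ?_
      exact le_cliqueNum_of_clique (s := {0, 2, 4, 6}) (by constructor <;> decide)
  · exact Nat.sInf_le ⟨P13, P13_cf5, P13_chrom_ge⟩
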